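/- arXiv:2303.07178 — 2 statements merged into one kernel-verified Lean document; each statement's English description precedes it below -/
import Mathlib

section
/- Let $k \ge 0$ be an integer and $\alpha \in (0,1)$. Define, for $r, r+h > 0$ and $\tilde\theta \in (-\pi, \pi)$ with $(h, \tilde\theta) \ne (0,0)$, $\Phi(\tilde\theta) = \left(h^2 + 2r(r+h)(1-\cos\tilde\theta)\right)^{-(2-\alpha)/2}$. Then the $k$-th derivative of $\Phi$ has the form $\Phi^{(k)}(\tilde\theta) = \sum_{i=1}^{k} \frac{((r+h)r)^i P_{k,i}(\tilde\theta)}{\left(h^2 + 2r(r+h)(1-\cos\tilde\theta)\right)^{(2+2i-\alpha)/2}}$ for $k \ge 1$, where each $P_{k,i}$ is a finite linear combination of terms $(\cos\tilde\theta)^j(\sin\tilde\theta)^l$ with $j + l = i$ and $l \ge 2i - k$. -/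
/-!
Write `D(θ) = h² + 2r(r+h)(1 - cos θ)`, so `D' = 2r(r+h) sin θ`. Differentiating a term
`((r+h)r)^i cos^j θ sin^l θ D^{-(2+2i-α)/2}` gives a combination of the terms with indices
`(i, j-1, l+1)`, `(i, j+1, l-1)` and `(i+1, j, l+1)`, and the constraints `j + l = i`,
`2i ≤ k + l` and (for `k ≥ 1`) `i ≥ 1` pass from `k` to `k + 1`. So differentiation on the
open set `D > 0` maps the span of the admissible terms of order `k` into that of order `k + 1`,
and `Φ` itself is the term `(0, 0, 0)` of order `0`.
-/

open Real Finset

namespace PolarKernel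

/-- The squared distance between the points with polar coordinates `(r, 0)` and `(r + h, θ)`. -/
noncomputable def sqDist (r h θ : ℝ) : ℝ := h ^ 2 + 2 * r * (r + h) * (1 - cos θ)

noncomputable def term (α r h : ℝ) (i j l : ℕ) (θ : ℝ) : ℝ :=
  ((r + h) * r) ^ i * cos θ ^ j * sin θ ^ l * sqDist r h θ ^ (-((2 + 2 * (i : ℝ) - α) / 2))

def IsAdmissible (k i j l : ℕ) : Prop := j + l = i ∧ 2 * i ≤ k + l ∧ (0 < k → 0 < i)

noncomputable def termSpan (α r h : ℝ) (k : ℕ) : Submodule ℝ (ℝ → ℝ) :=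
  Submodule.span ℝ ((fun p : ℕ × ℕ × ℕ => term α r h p.1 p.2.1 p.2.2) ''
    {p | IsAdmissible k p.1 p.2.1 p.2.2})

theorem hasDerivAt_sqDist (r h θ : ℝ) :
    HasDerivAt (sqDist r h) (2 * r * (r + h) * sin θ) θ := by
  have := (((hasDerivAt_cos θ).const_sub 1).const_mul (2 * r * (r + h))).const_add (h ^ 2)
  exact this.congr_deriv (by ring)

theorem isOpen_setOf_sqDist_pos (r h : ℝ) : IsOpen {θ | 0 < sqDist r h θ} :=
  isOpen_lt continuous_const (by unfold sqDist; fun_prop)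

theorem sqDist_pos {r h θ : ℝ} (hr : 0 < r) (hrh : 0 < r + h) (hθ : θ ∈ Set.Ioo (-π) π)
    (hne : h ≠ 0 ∨ θ ≠ 0) : 0 < sqDist r h θ := by
  have hrr : 0 < 2 * r * (r + h) := by positivity
  have hcos : 0 ≤ 1 - cos θ := sub_nonneg.2 (cos_le_one θ)
  unfold sqDist
  rcases hne with hh | hθ0
  · have := mul_nonneg hrr.le hcos
    positivity
  · have hcos_lt : cos θ < 1 := (cos_le_one θ).lt_of_ne fun h1 => hθ0 <|
      (cos_eq_one_iff_of_lt_of_lt (by linarith [hθ.1, pi_pos]) (by linarith [hθ.2, pi_pos])).1 h1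
    have := mul_pos hrr (sub_pos.2 hcos_lt)
    positivity

theorem hasDerivAt_term (α r h : ℝ) (i j l : ℕ) {θ : ℝ} (hD : 0 < sqDist r h θ) :
    HasDerivAt (term α r h i j l)
      (-(j : ℝ) * term α r h i (j - 1) (l + 1) θ + (l : ℝ) * term α r h i (j + 1) (l - 1) θ
        + (α - 2 - 2 * (i : ℝ)) * term α r h (i + 1) j (l + 1) θ) θ := by
  have hcos := ((hasDerivAt_cos θ).pow j).const_mul (((r + h) * r) ^ i)
  have hsin := (hasDerivAt_sin θ).pow l
  have hpow := (hasDerivAt_sqDist r h θ).rpow_const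
    (p := -((2 + 2 * (i : ℝ) - α) / 2)) (Or.inl hD.ne')
  have hq : -((2 + 2 * (i : ℝ) - α) / 2) - 1 = -((2 + 2 * ((i + 1 : ℕ) : ℝ) - α) / 2) := by
    push_cast; ring
  rw [hq] at hpow
  refine ((hcos.mul hsin).mul hpow).congr_deriv ?_
  simp only [term, Pi.mul_apply, Pi.pow_apply]
  ring

theorem term_mem_termSpan {α r h : ℝ} {k i j l : ℕ} (hadm : IsAdmissible k i j l) :
    term α r h i j l ∈ termSpan α r h k :=
  Submodule.subset_span ⟨(i, j, l), hadm, rfl⟩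

theorem exists_hasDerivAt_of_mem_termSpan {α r h : ℝ} {k : ℕ} {f : ℝ → ℝ}
    (hf : f ∈ termSpan α r h k) :
    ∃ f' ∈ termSpan α r h (k + 1), ∀ θ, 0 < sqDist r h θ → HasDerivAt f (f' θ) θ := by
  induction hf using Submodule.span_induction with
  | mem _ hmem =>
    obtain ⟨⟨i, j, l⟩, ⟨hsum, hk, hpos⟩, rfl⟩ := hmem
    dsimp only at hsum hk hpos ⊢
    -- a shifted index that leaves the admissible range only occurs with coefficient `0`
    have hj : (-(j : ℝ)) • term α r h i (j - 1) (l + 1) ∈ termSpan α r h (k + 1) := by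
      rcases Nat.eq_zero_or_pos j with rfl | hj
      · simp
      exact Submodule.smul_mem _ _ (term_mem_termSpan ⟨by omega, by omega, by omega⟩)
    have hl : (l : ℝ) • term α r h i (j + 1) (l - 1) ∈ termSpan α r h (k + 1) := by
      rcases Nat.eq_zero_or_pos l with rfl | hl
      · simp
      exact Submodule.smul_mem _ _ (term_mem_termSpan ⟨by omega, by omega, by omega⟩)
    have hi : (α - 2 - 2 * (i : ℝ)) • term α r h (i + 1) j (l + 1) ∈ termSpan α r h (k + 1) :=
      Submodule.smul_mem _ _ (term_mem_termSpan ⟨by omega, by omega, by omega⟩)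
    exact ⟨_, add_mem (add_mem hj hl) hi, fun θ hD => hasDerivAt_term α r h i j l hD⟩
  | zero => exact ⟨0, zero_mem _, fun θ _ => hasDerivAt_const θ 0⟩
  | add f g _ _ hf hg =>
    obtain ⟨f', hf', hf⟩ := hf
    obtain ⟨g', hg', hg⟩ := hg
    exact ⟨f' + g', add_mem hf' hg', fun θ hD => (hf θ hD).add (hg θ hD)⟩
  | smul a f _ hf =>
    obtain ⟨f', hf', hf⟩ := hf
    exact ⟨a • f', Submodule.smul_mem _ a hf', fun θ hD => (hf θ hD).const_smul a⟩

theorem exists_mem_termSpan_iteratedDeriv_eq (α r h : ℝ) (k : ℕ) :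
    ∃ f ∈ termSpan α r h k, ∀ θ, 0 < sqDist r h θ →
      iteratedDeriv k (fun t => sqDist r h t ^ (-((2 - α) / 2))) θ = f θ := by
  induction k with
  | zero =>
    refine ⟨term α r h 0 0 0, term_mem_termSpan ⟨rfl, le_rfl, fun h => h.false.elim⟩, ?_⟩
    intro θ _
    simp [term]
  | succ k ih =>
    obtain ⟨f, hf, heq⟩ := ih
    obtain ⟨f', hf', hderiv⟩ := exists_hasDerivAt_of_mem_termSpan hf
    refine ⟨f', hf', fun θ hD => ?_⟩
    have hev : iteratedDeriv k (fun t => sqDist r h t ^ (-((2 - α) / 2))) =ᶠ[nhds θ] f :=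
      Filter.eventually_of_mem ((isOpen_setOf_sqDist_pos r h).mem_nhds hD) heq
    rw [iteratedDeriv_succ, ((hderiv θ hD).congr_of_eventuallyEq hev).deriv]

theorem exists_coeff_of_mem_termSpan {α r h : ℝ} {k : ℕ} (hk : 1 ≤ k) {f : ℝ → ℝ}
    (hf : f ∈ termSpan α r h k) :
    ∃ c : ℕ → ℕ → ℕ → ℝ,
      (∀ i j l, c i j l ≠ 0 → j + l = i ∧ 2 * (i : ℤ) - (k : ℤ) ≤ (l : ℤ)) ∧
      ∀ θ, f θ = ∑ i ∈ Icc 1 k, ((r + h) * r) ^ i *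
        (∑ j ∈ range (k + 1), ∑ l ∈ range (k + 1), c i j l * cos θ ^ j * sin θ ^ l) *
        sqDist r h θ ^ (-((2 + 2 * (i : ℝ) - α) / 2)) := by
  obtain ⟨a, ha, rfl⟩ := (Finsupp.mem_span_image_iff_linearCombination ℝ).1 hf
  have hadm : ∀ i j l, a (i, j, l) ≠ 0 → IsAdmissible k i j l := fun i j l hne =>
    ha (Finsupp.mem_support_iff.2 hne)
  refine ⟨fun i j l => a (i, j, l), fun i j l hne => ?_, fun θ => ?_⟩
  · obtain ⟨hsum, hle, -⟩ := hadm i j l hne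
    omega
  have hsupp : a.support ⊆ Icc 1 k ×ˢ range (k + 1) ×ˢ range (k + 1) := fun p hp => by
    obtain ⟨hsum, hle, hpos⟩ := hadm p.1 p.2.1 p.2.2 (Finsupp.mem_support_iff.1 hp)
    simp only [mem_product, mem_Icc, mem_range]
    omega
  rw [Finsupp.linearCombination_apply, Finsupp.sum_of_support_subset a hsupp _ (by simp),
    Finset.sum_apply, sum_product]
  refine sum_congr rfl fun i _ => ?_
  rw [sum_product, mul_sum, sum_mul]
  refine sum_congr rfl fun j _ => ?_
  rw [mul_sum, sum_mul]
  refine sum_congr rfl fun l _ => ?_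
  simp only [Pi.smul_apply, smul_eq_mul, term]
  ring

end PolarKernel

open PolarKernel

theorem stmt9_general (α r h : ℝ) (k : ℕ) (hr : 0 < r)
    (hrh : 0 < r + h) (hk : 1 ≤ k) :
    ∃ c : ℕ → ℕ → ℕ → ℝ,
      (∀ i j l, c i j l ≠ 0 → j + l = i ∧ 2 * (i : ℤ) - (k : ℤ) ≤ (l : ℤ)) ∧
      ∀ θ ∈ Set.Ioo (-π) π, (h ≠ 0 ∨ θ ≠ 0) →
        iteratedDeriv k
            (fun t : ℝ => (h ^ 2 + 2 * r * (r + h) * (1 - Real.cos t)) ^ (-((2 - α) / 2))) θ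
          = ∑ i ∈ Finset.Icc 1 k, ((r + h) * r) ^ i *
              (∑ j ∈ Finset.range (k + 1), ∑ l ∈ Finset.range (k + 1),
                c i j l * Real.cos θ ^ j * Real.sin θ ^ l) *
              (h ^ 2 + 2 * r * (r + h) * (1 - Real.cos θ)) ^ (-((2 + 2 * (i : ℝ) - α) / 2)) := by
  obtain ⟨f, hf, hderiv⟩ := exists_mem_termSpan_iteratedDeriv_eq α r h k
  obtain ⟨c, hc, hf_eq⟩ := exists_coeff_of_mem_termSpan hk hf
  exact ⟨c, hc, fun θ hθ hne => (hderiv θ (sqDist_pos hr hrh hθ hne)).trans (hf_eq θ)⟩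

/-- Structure of the `k`-th derivative of
`Φ(θ) = (h² + 2r(r+h)(1-cos θ))^{-(2-α)/2}`: it is a sum over `1 ≤ i ≤ k` of terms
`((r+h)r)^i P_{k,i}(θ) (h² + 2r(r+h)(1-cos θ))^{-(2+2i-α)/2}` where each `P_{k,i}` is a
finite linear combination of `(cos θ)^j (sin θ)^l` with `j + l = i` and `l ≥ 2i - k`. -/
theorem stmt9 (α r h : ℝ) (k : ℕ) (hα : α ∈ Set.Ioo (0:ℝ) 1) (hr : 0 < r)
    (hrh : 0 < r + h) (hk : 1 ≤ k) :
    ∃ c : ℕ → ℕ → ℕ → ℝ,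
      (∀ i j l, c i j l ≠ 0 → j + l = i ∧ 2 * (i : ℤ) - (k : ℤ) ≤ (l : ℤ)) ∧
      ∀ θ ∈ Set.Ioo (-π) π, (h ≠ 0 ∨ θ ≠ 0) →
        iteratedDeriv k
            (fun t : ℝ => (h ^ 2 + 2 * r * (r + h) * (1 - Real.cos t)) ^ (-((2 - α) / 2))) θ
          = ∑ i ∈ Finset.Icc 1 k, ((r + h) * r) ^ i *
              (∑ j ∈ Finset.range (k + 1), ∑ l ∈ Finset.range (k + 1),
                c i j l * Real.cos θ ^ j * Real.sin θ ^ l) *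
              (h ^ 2 + 2 * r * (r + h) * (1 - Real.cos θ)) ^ (-((2 + 2 * (i : ℝ) - α) / 2)) :=
  stmt9_general α r h k hr hrh hk
end

section
/- Let $f : (0,\infty) \to \mathbb{R}$ be continuously differentiable with $M := \sup_r(|f(r)| + |f'(r)|) < \infty$, and suppose $f \ge 0$. If $\int_0^\infty r^{3+2\alpha-2\epsilon} f(r)^2 \cdot r\, dr \le B^2$ for some constants $\alpha, \epsilon, B > 0$ (interpreting the weighted $L^2$ bound $\|r^{1+\alpha-\epsilon} f\|_{L^2(r\,dr)} \le B$), then for every $r_0 \ge 1$, $f(r_0)^3 \le \frac{8 M B^2}{r_0^{3+2\alpha-2\epsilon}}$, i.e. $f(r_0) \le (8MB^2)^{1/3} r_0^{-(3+2\alpha-2\epsilon)/3}$. -/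
/-!
Since `|f'| ≤ M`, on an interval of length `δ = f(r₀)/(2M)` next to `r₀` we have
`f ≥ f(r₀)/2` (the case `f(r₀) ≤ 0` being trivial). Taking the interval on the side of `r₀`
where `r ↦ r^{3+2α-2ε}` is at least its value at `r₀` (to the right if the exponent is
nonnegative, to the left otherwise, which fits inside `(0, ∞)` because `δ ≤ 1/2 < r₀`), the
weighted integral over it is at least `(f(r₀)/2)² r₀^{3+2α-2ε} δ = f(r₀)³ r₀^{3+2α-2ε} / (8M)`,
and it is at most `B²`.
-/

open Real MeasureTheory Set

lemma mul_sub_le_of_setLIntegral_le {g : ℝ → ℝ} {s : Set ℝ} {a b m C : ℝ}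
    (hs : Icc a b ⊆ s) (hm : 0 ≤ m) (hC₀ : 0 ≤ C) (hg : ∀ r ∈ Icc a b, m ≤ g r)
    (hC : ∫⁻ r in s, ENNReal.ofReal (g r) ≤ ENNReal.ofReal C) :
    m * (b - a) ≤ C := by
  have hIcc : ENNReal.ofReal (m * (b - a)) ≤ ∫⁻ r in Icc a b, ENNReal.ofReal (g r) := by
    rw [ENNReal.ofReal_mul hm, ← Real.volume_Icc, ← setLIntegral_const]
    exact setLIntegral_mono' measurableSet_Icc fun r hr ↦ ENNReal.ofReal_le_ofReal (hg r hr)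
  exact (ENNReal.ofReal_le_ofReal_iff hC₀).1 (hIcc.trans ((lintegral_mono_set hs).trans hC))

lemma Convex.half_le_of_abs_sub_le {f : ℝ → ℝ} {s : Set ℝ} {M x₀ x : ℝ} (hs : Convex ℝ s)
    (hf : DifferentiableOn ℝ f s) (hf' : ∀ y ∈ s, |derivWithin f s y| ≤ M) (hM : 0 < M)
    (hx₀ : x₀ ∈ s) (hx : x ∈ s) (hxx₀ : |x - x₀| ≤ f x₀ / (2 * M)) :
    f x₀ / 2 ≤ f x := by
  have hlip : |f x - f x₀| ≤ M * |x - x₀| :=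
    hs.norm_image_sub_le_of_norm_derivWithin_le hf hf' hx₀ hx
  have : M * |x - x₀| ≤ f x₀ / 2 := by
    calc M * |x - x₀| ≤ M * (f x₀ / (2 * M)) := by gcongr
      _ = f x₀ / 2 := by field_simp
  linarith [(abs_le.1 (hlip.trans this)).1]

lemma exists_Icc_subset_rpow_le {r₀ δ : ℝ} (w : ℝ) (hδ : 0 ≤ δ) (hδr₀ : δ < r₀) :
    ∃ a, 0 < a ∧ Icc a (a + δ) ⊆ Icc (r₀ - δ) (r₀ + δ) ∧ ∀ r ∈ Icc a (a + δ), r₀ ^ w ≤ r ^ w := by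
  rcases le_or_gt 0 w with hw | hw
  · refine ⟨r₀, by linarith, Icc_subset_Icc (by linarith) le_rfl, fun r hr ↦ ?_⟩
    exact Real.rpow_le_rpow (by linarith) hr.1 hw
  · refine ⟨r₀ - δ, by linarith, Icc_subset_Icc le_rfl (by linarith), fun r hr ↦ ?_⟩
    exact Real.rpow_le_rpow_of_nonpos (by linarith [hr.1]) (by linarith [hr.2]) hw.le

theorem stmt10_general (f : ℝ → ℝ) (M B α ε : ℝ)
    (hf : ContDiffOn ℝ 1 f (Set.Ioi 0))
    (hbound : ∀ r > (0:ℝ), |f r| + |derivWithin f (Set.Ioi 0) r| ≤ M)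
    (hL2 : ∫⁻ r in Set.Ioi (0:ℝ),
        ENNReal.ofReal (r ^ (2 * (1 + α - ε)) * f r ^ 2 * r) ≤ ENNReal.ofReal (B ^ 2)) :
    ∀ r₀ ≥ (1:ℝ), f r₀ ^ 3 ≤ 8 * M * B ^ 2 / r₀ ^ (3 + 2 * α - 2 * ε) := by
  intro r₀ hr₀
  set w := 3 + 2 * α - 2 * ε
  set c := f r₀
  have hr₀w : 0 < r₀ ^ w := by positivity
  have hcM : |c| ≤ M := by
    linarith [hbound r₀ (by linarith), abs_nonneg (derivWithin f (Ioi 0) r₀)]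
  rcases le_or_gt c 0 with hc | hc
  · have : c ^ 3 ≤ 0 := Odd.pow_nonpos (by decide) hc
    exact this.trans (by have := (abs_nonneg c).trans hcM; positivity)
  have hM : 0 < M := hc.trans_le ((le_abs_self c).trans hcM)
  set δ := c / (2 * M) with hδ
  have hδr₀ : δ < r₀ := by
    have : δ ≤ 1 / 2 := by rw [div_le_iff₀ (by positivity)]; linarith [le_abs_self c]
    linarith
  obtain ⟨a, ha, hsub, hweight⟩ := exists_Icc_subset_rpow_le w (by positivity) hδr₀
  have hIcc_pos : Icc a (a + δ) ⊆ Ioi 0 := fun r hr ↦ ha.trans_le hr.1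
  have hhalf : ∀ r ∈ Icc a (a + δ), c / 2 ≤ f r := fun r hr ↦
    (convex_Ioi 0).half_le_of_abs_sub_le (hf.differentiableOn one_ne_zero)
      (fun y hy ↦ by linarith [hbound y hy, abs_nonneg (f y)]) hM (by positivity : (0:ℝ) < r₀)
      (hIcc_pos hr) (abs_le.2 ⟨by linarith [(hsub hr).1], by linarith [(hsub hr).2]⟩)
  have hintegrand : ∀ r ∈ Icc a (a + δ),
      (c / 2) ^ 2 * r₀ ^ w ≤ r ^ (2 * (1 + α - ε)) * f r ^ 2 * r := fun r hr ↦
    calc (c / 2) ^ 2 * r₀ ^ w ≤ f r ^ 2 * r ^ w :=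
          mul_le_mul (pow_le_pow_left₀ (by positivity) (hhalf r hr) 2) (hweight r hr)
            hr₀w.le (sq_nonneg _)
      _ = r ^ (2 * (1 + α - ε)) * f r ^ 2 * r := by
          rw [show w = 2 * (1 + α - ε) + 1 by ring, Real.rpow_add_one (hIcc_pos hr).ne']; ring
  have key := mul_sub_le_of_setLIntegral_le hIcc_pos (by positivity) (sq_nonneg B) hintegrand hL2
  have hlhs : (c / 2) ^ 2 * r₀ ^ w * (a + δ - a) = c ^ 3 * r₀ ^ w / (8 * M) := by
    rw [add_sub_cancel_left, hδ]; field_simp; ring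
  rw [hlhs, div_le_iff₀ (by positivity)] at key
  rw [le_div_iff₀ hr₀w]
  linarith

/-- If `f : (0,∞) → [0,∞)` is `C¹` with `|f| + |f'| ≤ M`, and the weighted `L²` bound
`∫₀^∞ r^{2(1+α-ε)} f(r)² · r dr ≤ B²` holds, then for every `r₀ ≥ 1`,
`f(r₀)³ ≤ 8 M B² / r₀^{3+2α-2ε}`. -/
theorem stmt10 (f : ℝ → ℝ) (M B α ε : ℝ) (hM : 0 < M) (hB : 0 < B) (hα : 0 < α)
    (hε : 0 < ε)
    (hf : ContDiffOn ℝ 1 f (Set.Ioi 0))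
    (hpos : ∀ r > (0:ℝ), 0 ≤ f r)
    (hbound : ∀ r > (0:ℝ), |f r| + |derivWithin f (Set.Ioi 0) r| ≤ M)
    (hL2 : ∫⁻ r in Set.Ioi (0:ℝ),
        ENNReal.ofReal (r ^ (2 * (1 + α - ε)) * f r ^ 2 * r) ≤ ENNReal.ofReal (B ^ 2)) :
    ∀ r₀ ≥ (1:ℝ), f r₀ ^ 3 ≤ 8 * M * B ^ 2 / r₀ ^ (3 + 2 * α - 2 * ε) :=
  stmt10_general f M B α ε hf hbound hL2
end
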